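/- In an AL-monoid A, if distinct a,b,c satisfy a∨b = b∨c = c∨a and a∧b∧c = 0, then the triangle on a,b,c has fixty, i.e. a*b = c, b*c = a, c*a = b. -/
import Mathlib


/-- An Autometrized lattice ordered monoid (AL-monoid). -/
class ALMonoid (A : Type*) extends Lattice A, AddCommMonoid A where
  amul : A → A → A
  add_le_add_left' : ∀ a b : A, a ≤ b → ∀ c : A, c + a ≤ c + b
  amul_core : ∀ a b : A, amul a (a ⊓ b) + b = a ⊔ b
  add_contract : ∀ a x y : A, amul (a + x) (a + y) ≤ amul x y
  sup_contract : ∀ a x y : A, amul (a ⊔ x) (a ⊔ y) ≤ amul x y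
  inf_contract : ∀ a x y : A, amul (a ⊓ x) (a ⊓ y) ≤ amul x y
  amul_contract : ∀ a x y : A, amul (amul a x) (amul a y) ≤ amul x y
  inf_amul_sup : ∀ a b : A, amul a (a ⊔ b) ⊓ amul b (a ⊔ b) = 0
  amul_nonneg : ∀ a b : A, 0 ≤ amul a b
  amul_eq_zero_iff : ∀ a b : A, amul a b = 0 ↔ a = b
  amul_comm : ∀ a b : A, amul a b = amul b a
  amul_triangle : ∀ a b c : A, amul a b ≤ amul a c + amul c b

open ALMonoid

infixl:70 " ⋆ " => ALMonoid.amul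

section Aux

variable {A : Type*} [ALMonoid A]

lemma ALM.star_zero (x : A) (hx : 0 ≤ x) : x ⋆ 0 = x := by
  have h := amul_core x 0
  rwa [inf_eq_right.2 hx, sup_eq_left.2 hx, add_zero] at h

lemma ALM.star_sup_eq (x y : A) : x ⋆ (x ⊔ y) = y ⋆ (x ⊓ y) := by
  apply le_antisymm
  · have h := sup_contract x (x ⊓ y) y
    rw [sup_inf_self] at h
    rw [amul_comm y (x ⊓ y)]
    exact h
  · have h := inf_contract y x (x ⊔ y)
    rw [inf_comm y x, inf_eq_left.2 (le_sup_right : y ≤ x ⊔ y)] at h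
    rw [amul_comm y (x ⊓ y)]
    exact h

lemma ALM.disj_add (u v : A) (hu : 0 ≤ u) (huv : u ⊓ v = 0) : u + v = u ⊔ v := by
  have h := amul_core u v
  rwa [huv, ALM.star_zero u hu] at h

lemma ALM.star_decomp (x y : A) : x ⋆ y = x ⋆ (x ⊔ y) + y ⋆ (x ⊔ y) := by
  apply le_antisymm
  · calc x ⋆ y ≤ x ⋆ (x ⊔ y) + (x ⊔ y) ⋆ y := amul_triangle x y (x ⊔ y)
    _ = x ⋆ (x ⊔ y) + y ⋆ (x ⊔ y) := by rw [amul_comm (x ⊔ y) y]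
  · rw [ALM.disj_add (x ⋆ (x ⊔ y)) (y ⋆ (x ⊔ y)) (amul_nonneg _ _) (inf_amul_sup x y)]
    apply sup_le
    · have h := sup_contract x x y
      rwa [sup_idem] at h
    · have h := sup_contract y x y
      rw [sup_comm y x, sup_idem] at h
      rw [amul_comm]
      exact h

lemma ALM.key (a b c : A) (hs1 : a ⊔ b = b ⊔ c) (hs2 : b ⊔ c = c ⊔ a)
    (hinf : a ⊓ b ⊓ c = 0) : a ⋆ (a ⊔ b) = b ⊓ c := by
  have hp0 : (0 : A) ≤ b ⊓ c := by
    rw [← hinf]; exact le_inf (le_trans inf_le_left inf_le_right) inf_le_right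
  have hr0 : (0 : A) ≤ a ⊓ b := by rw [← hinf]; exact inf_le_left
  have hac : a ⊔ c = a ⊔ b := by rw [sup_comm a c, ← hs2, ← hs1]
  have har : a ⋆ (a ⊔ b) = b ⋆ (a ⊓ b) := ALM.star_sup_eq a b
  have haq : a ⋆ (a ⊔ b) = c ⋆ (a ⊓ c) := by
    rw [← hac]; exact ALM.star_sup_eq a c
  -- p ≤ α
  have hple : b ⊓ c ≤ a ⋆ (a ⊔ b) := by
    have h := inf_contract c b (a ⊓ b)
    rw [inf_comm c b, inf_comm c (a ⊓ b), hinf, ALM.star_zero (b ⊓ c) hp0] at h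
    rw [har]
    exact h
  -- α ≤ b
  have hb : a ⋆ (a ⊔ b) ≤ b := by
    have hcore := amul_core b (a ⊓ b)
    rw [inf_eq_right.2 (inf_le_right : a ⊓ b ≤ b),
        sup_eq_left.2 (inf_le_right : a ⊓ b ≤ b)] at hcore
    calc a ⋆ (a ⊔ b) = b ⋆ (a ⊓ b) + 0 := by rw [har, add_zero]
      _ ≤ b ⋆ (a ⊓ b) + (a ⊓ b) := add_le_add_left' 0 (a ⊓ b) hr0 _
      _ = b := hcore
  -- α ≤ c
  have hq0 : (0 : A) ≤ a ⊓ c := by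
    rw [← hinf]; exact le_inf (le_trans inf_le_left inf_le_left) inf_le_right
  have hc : a ⋆ (a ⊔ b) ≤ c := by
    have hcore := amul_core c (a ⊓ c)
    rw [inf_eq_right.2 (inf_le_right : a ⊓ c ≤ c),
        sup_eq_left.2 (inf_le_right : a ⊓ c ≤ c)] at hcore
    calc a ⋆ (a ⊔ b) = c ⋆ (a ⊓ c) + 0 := by rw [haq, add_zero]
      _ ≤ c ⋆ (a ⊓ c) + (a ⊓ c) := add_le_add_left' 0 (a ⊓ c) hq0 _
      _ = c := hcore
  exact le_antisymm (le_inf hb hc) hple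

lemma ALM.split (a b c : A) (hs1 : a ⊔ b = b ⊔ c) (hs2 : b ⊔ c = c ⊔ a)
    (hinf : a ⊓ b ⊓ c = 0) : c = b ⊓ c + c ⊓ a := by
  have hq0 : (0 : A) ≤ c ⊓ a := by
    rw [← hinf]; exact le_inf inf_le_right (le_trans inf_le_left inf_le_left)
  have hac : a ⊔ c = a ⊔ b := by rw [sup_comm a c, ← hs2, ← hs1]
  have hcq : c ⋆ (c ⊓ a) = b ⊓ c := by
    rw [inf_comm c a, ← ALM.star_sup_eq a c, hac]
    exact ALM.key a b c hs1 hs2 hinf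
  have hcore := amul_core c (c ⊓ a)
  rw [inf_eq_right.2 (inf_le_left : c ⊓ a ≤ c),
      sup_eq_left.2 (inf_le_left : c ⊓ a ≤ c), hcq] at hcore
  exact hcore.symm

end Aux

theorem stmt2 {A : Type*} [ALMonoid A] (a b c : A)
    (hab : a ≠ b) (hbc : b ≠ c) (hca : c ≠ a)
    (hsup1 : a ⊔ b = b ⊔ c) (hsup2 : b ⊔ c = c ⊔ a) (hinf : a ⊓ b ⊓ c = 0) :
    a ⋆ b = c ∧ b ⋆ c = a ∧ c ⋆ a = b := by
  have hsup3 : c ⊔ a = a ⊔ b := (hsup1.trans hsup2).symm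
  have hinf2 : b ⊓ c ⊓ a = 0 := by rw [inf_comm (b ⊓ c) a, ← inf_assoc, hinf]
  have hinf3 : c ⊓ a ⊓ b = 0 := by
    rw [inf_comm (c ⊓ a) b, ← inf_assoc, hinf2]
  have h1 := ALM.key a b c hsup1 hsup2 hinf
  have h2 := ALM.key b c a hsup2 hsup3 hinf2
  have h3 := ALM.key c a b hsup3 hsup1 hinf3
  refine ⟨?_, ?_, ?_⟩
  · rw [ALM.star_decomp a b, h1, hsup1, h2]
    exact (ALM.split a b c hsup1 hsup2 hinf).symm
  · rw [ALM.star_decomp b c, h2, hsup2, h3]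
    exact (ALM.split b c a hsup2 hsup3 hinf2).symm
  · rw [ALM.star_decomp c a, h3, hsup3, h1]
    exact (ALM.split c a b hsup3 hsup1 hinf3).symm
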